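/- arXiv:1310.3570 — 2 statements merged into one kernel-verified Lean document; each statement's English description precedes it below -/
import Mathlib

section
/- Let 0 → U →ι V →p W → 0 be a short exact sequence of finite-dimensional vector spaces over a field, where U, V, W carry ℤ/2-gradings, the maps ι and p preserve the gradings, U, V, W carry odd endomorphisms D_U, D_V, D_W, and ι ∘ D_U = D_V ∘ ι, p ∘ D_V = D_W ∘ p. Then the higher Dirac index is additive: Σ_{k≥0}( dim H^k(V,D_V)⁺ − dim H^k(V,D_V)⁻ ) = Σ_{k≥0}( dim H^k(U,D_U)⁺ − dim H^k(U,D_U)⁻ ) + Σ_{k≥0}( dim H^k(W,D_W)⁺ − dim H^k(W,D_W)⁻ ), as integers (all sums are finite). (Corollary 3.7: the higher Dirac index descends to the Grothendieck group.) -/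
open LinearMap Module

/-- The higher Dirac index of a ℤ/2-graded vector space `V = V⁺ ⊕ V⁻` with an
(odd) endomorphism `D`:
`I(V) = Σ_{k≥0} (dim H^k(V,D)⁺ − dim H^k(V,D)⁻)`, where
`H^k(V,D)^± = ((range D^{2k} ⊓ ker D) ⊓ V^±)/((range D^{2k+1} ⊓ ker D) ⊓ V^±)`. -/
noncomputable def diracIndex (𝕜 : Type*) {V : Type*} [Field 𝕜] [AddCommGroup V] [Module 𝕜 V]
    (D : Module.End 𝕜 V) (Vp Vm : Submodule 𝕜 V) : ℤ :=
  ∑ᶠ k : ℕ,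
    (((finrank 𝕜 ↥((range (D ^ (2 * k)) ⊓ ker D) ⊓ Vp) : ℤ) -
        finrank 𝕜 ↥((range (D ^ (2 * k + 1)) ⊓ ker D) ⊓ Vp)) -
      ((finrank 𝕜 ↥((range (D ^ (2 * k)) ⊓ ker D) ⊓ Vm) : ℤ) -
        finrank 𝕜 ↥((range (D ^ (2 * k + 1)) ⊓ ker D) ⊓ Vm)))

/-!
An odd `D` maps `range (D ^ n) ⊓ V^±` onto `range (D ^ (n + 1)) ⊓ V^∓` with kernel
`range (D ^ n) ⊓ ker D ⊓ V^±`. By rank–nullity the `k`-th summand of the index is therefore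
`s (2 * k) - s (2 * k + 2)`, where `s n` is the superdimension of `range (D ^ n)`; this telescopes,
and `s n = 0` once the ranges have stabilised, because `D` then swaps the two graded pieces of the
stable range bijectively. So the index is `dim V⁺ - dim V⁻`, which is additive on graded short
exact sequences.
-/

namespace Submodule

variable {R M N : Type*} [Ring R] [AddCommGroup M] [Module R M] [AddCommGroup N] [Module R N]

theorem map_eq_map_sup_inf {f : M →ₗ[R] N} {Mp Mm : Submodule R M} {Np Nm : Submodule R N}
    (hN : Disjoint Np Nm) (hp : ∀ x ∈ Mp, f x ∈ Np) (hm : ∀ x ∈ Mm, f x ∈ Nm) :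
    Mp.map f = (Mp ⊔ Mm).map f ⊓ Np := by
  refine le_antisymm (le_inf (map_mono le_sup_left) (map_le_iff_le_comap.mpr hp)) ?_
  rintro _ ⟨⟨x, hx, rfl⟩, hfx⟩
  obtain ⟨a, ha, b, hb, rfl⟩ := mem_sup.mp hx
  have hfb : f b = 0 := by
    refine (Submodule.disjoint_def.mp hN) _ ?_ (hm b hb)
    simpa using sub_mem hfx (hp a ha)
  exact ⟨a, ha, by simp [hfb]⟩

end Submodule

theorem Submodule.finrank_map_add_finrank_inf_ker {K V W : Type*} [DivisionRing K]
    [AddCommGroup V] [Module K V] [FiniteDimensional K V] [AddCommGroup W] [Module K W]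
    (f : V →ₗ[K] W) (S : Submodule K V) :
    finrank K (S.map f) + finrank K ↥(S ⊓ ker f) = finrank K S := by
  rw [← (f.domRestrict S).finrank_range_add_finrank_ker, range_domRestrict, ker_domRestrict,
    ← Submodule.map_comap_subtype, Submodule.finrank_map_subtype_eq]

theorem Module.End.range_pow_succ {R M : Type*} [Semiring R] [AddCommMonoid M] [Module R M]
    (D : Module.End R M) (n : ℕ) : range (D ^ (n + 1)) = (range (D ^ n)).map D := by
  rw [pow_succ', Module.End.mul_eq_comp, range_comp]

theorem Module.End.eventually_range_pow_succ_eq_and_inf_ker_eq_bot {R M : Type*} [Ring R]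
    [AddCommGroup M] [Module R M] [IsNoetherian R M] [IsArtinian R M] (D : Module.End R M) :
    ∀ᶠ n in Filter.atTop,
      range (D ^ (n + 1)) = range (D ^ n) ∧ range (D ^ n) ⊓ ker D = ⊥ := by
  filter_upwards [D.eventually_iInf_range_pow_eq,
    (Filter.tendsto_add_atTop_nat 1).eventually D.eventually_iInf_range_pow_eq,
    D.eventually_isCompl_ker_pow_range_pow, Filter.eventually_ge_atTop 1]
    with n hn hn' hcompl hpos
  refine ⟨hn'.symm.trans hn, eq_bot_iff.mpr ?_⟩
  have hker : ker D ≤ ker (D ^ n) := by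
    obtain ⟨m, rfl⟩ := Nat.exists_eq_add_of_le' hpos
    rw [pow_succ, Module.End.mul_eq_comp]
    exact ker_le_ker_comp D _
  rw [inf_comm]
  exact hcompl.disjoint.mono_left hker |>.le_bot

noncomputable def sdim {𝕜 V : Type*} [Field 𝕜] [AddCommGroup V] [Module 𝕜 V]
    (Vp Vm S : Submodule 𝕜 V) : ℤ :=
  finrank 𝕜 ↥(S ⊓ Vp) - finrank 𝕜 ↥(S ⊓ Vm)

section OddEndomorphism

variable {𝕜 V : Type*} [Field 𝕜] [AddCommGroup V] [Module 𝕜 V] {D : Module.End 𝕜 V}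
  {Vp Vm : Submodule 𝕜 V}

theorem range_pow_inf_sup_range_pow_inf (hV : Codisjoint Vp Vm) (hp : ∀ x ∈ Vp, D x ∈ Vm)
    (hm : ∀ x ∈ Vm, D x ∈ Vp) (n : ℕ) :
    range (D ^ n) ⊓ Vp ⊔ range (D ^ n) ⊓ Vm = range (D ^ n) := by
  refine le_antisymm (sup_le inf_le_left inf_le_left) ?_
  induction n with
  | zero => simp [Module.End.one_eq_id, hV.eq_top]
  | succ n ih =>
    have hmapp : (range (D ^ n) ⊓ Vp).map D ≤ range (D ^ (n + 1)) ⊓ Vm :=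
      le_inf (D.range_pow_succ n ▸ Submodule.map_mono inf_le_left)
        (Submodule.map_le_iff_le_comap.mpr fun x hx => hp x hx.2)
    have hmapm : (range (D ^ n) ⊓ Vm).map D ≤ range (D ^ (n + 1)) ⊓ Vp :=
      le_inf (D.range_pow_succ n ▸ Submodule.map_mono inf_le_left)
        (Submodule.map_le_iff_le_comap.mpr fun x hx => hm x hx.2)
    calc range (D ^ (n + 1)) = (range (D ^ n)).map D := D.range_pow_succ n
      _ ≤ (range (D ^ n) ⊓ Vp ⊔ range (D ^ n) ⊓ Vm).map D := Submodule.map_mono ih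
      _ ≤ _ := by
        rw [Submodule.map_sup]
        exact (sup_le_sup hmapp hmapm).trans_eq (sup_comm _ _)

theorem map_range_pow_inf (hV : IsCompl Vp Vm) (hp : ∀ x ∈ Vp, D x ∈ Vm)
    (hm : ∀ x ∈ Vm, D x ∈ Vp) (n : ℕ) :
    (range (D ^ n) ⊓ Vp).map D = range (D ^ (n + 1)) ⊓ Vm := by
  rw [Submodule.map_eq_map_sup_inf (Mp := range (D ^ n) ⊓ Vp) (Mm := range (D ^ n) ⊓ Vm)
    hV.disjoint.symm (fun x hx => hp x hx.2) (fun x hx => hm x hx.2),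
    range_pow_inf_sup_range_pow_inf hV.codisjoint hp hm, ← D.range_pow_succ]

variable [FiniteDimensional 𝕜 V]

theorem finrank_range_pow_inf_ker_inf_add (hV : IsCompl Vp Vm) (hp : ∀ x ∈ Vp, D x ∈ Vm)
    (hm : ∀ x ∈ Vm, D x ∈ Vp) (n : ℕ) :
    finrank 𝕜 ↥((range (D ^ n) ⊓ ker D) ⊓ Vp) + finrank 𝕜 ↥(range (D ^ (n + 1)) ⊓ Vm) =
      finrank 𝕜 ↥(range (D ^ n) ⊓ Vp) := by
  rw [inf_right_comm, ← map_range_pow_inf hV hp hm, add_comm]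
  exact Submodule.finrank_map_add_finrank_inf_ker D _

theorem diracIndex_summand_eq (hV : IsCompl Vp Vm) (hp : ∀ x ∈ Vp, D x ∈ Vm)
    (hm : ∀ x ∈ Vm, D x ∈ Vp) (k : ℕ) :
    (((finrank 𝕜 ↥((range (D ^ (2 * k)) ⊓ ker D) ⊓ Vp) : ℤ) -
        finrank 𝕜 ↥((range (D ^ (2 * k + 1)) ⊓ ker D) ⊓ Vp)) -
      ((finrank 𝕜 ↥((range (D ^ (2 * k)) ⊓ ker D) ⊓ Vm) : ℤ) -
        finrank 𝕜 ↥((range (D ^ (2 * k + 1)) ⊓ ker D) ⊓ Vm))) =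
      sdim Vp Vm (range (D ^ (2 * k))) - sdim Vp Vm (range (D ^ (2 * (k + 1)))) := by
  have hp₀ := finrank_range_pow_inf_ker_inf_add hV hp hm (2 * k)
  have hp₁ := finrank_range_pow_inf_ker_inf_add hV hp hm (2 * k + 1)
  have hm₀ := finrank_range_pow_inf_ker_inf_add hV.symm hm hp (2 * k)
  have hm₁ := finrank_range_pow_inf_ker_inf_add hV.symm hm hp (2 * k + 1)
  rw [show 2 * k + 1 + 1 = 2 * (k + 1) by ring] at hp₁ hm₁
  unfold sdim
  omega

theorem sdim_range_pow_eq_zero (hV : IsCompl Vp Vm) (hp : ∀ x ∈ Vp, D x ∈ Vm)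
    (hm : ∀ x ∈ Vm, D x ∈ Vp) {n : ℕ} (hstable : range (D ^ (n + 1)) = range (D ^ n))
    (hker : range (D ^ n) ⊓ ker D = ⊥) : sdim Vp Vm (range (D ^ n)) = 0 := by
  have h := finrank_range_pow_inf_ker_inf_add hV hp hm n
  rw [hker, bot_inf_eq, finrank_bot, zero_add, hstable] at h
  unfold sdim
  omega

theorem diracIndex_eq_finrank_sub_finrank (hV : IsCompl Vp Vm) (hp : ∀ x ∈ Vp, D x ∈ Vm)
    (hm : ∀ x ∈ Vm, D x ∈ Vp) :
    diracIndex 𝕜 D Vp Vm = finrank 𝕜 Vp - finrank 𝕜 Vm := by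
  obtain ⟨N, hN⟩ := Filter.eventually_atTop.mp D.eventually_range_pow_succ_eq_and_inf_ker_eq_bot
  have hzero (n : ℕ) (hn : N ≤ n) : sdim Vp Vm (range (D ^ n)) = 0 :=
    sdim_range_pow_eq_zero hV hp hm (hN n hn).1 (hN n hn).2
  set f : ℕ → ℤ := fun k => sdim Vp Vm (range (D ^ (2 * k)))
  have hsupport : Function.support (fun k => f k - f (k + 1)) ⊆ Finset.range N := by
    intro k hk
    rw [Finset.coe_range, Set.mem_Iio]
    by_contra! hkN
    exact hk (by simp only [f, hzero (2 * k) (by omega), hzero (2 * (k + 1)) (by omega), sub_self])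
  calc diracIndex 𝕜 D Vp Vm = ∑ᶠ k, (f k - f (k + 1)) :=
        finsum_congr (diracIndex_summand_eq hV hp hm)
    _ = ∑ k ∈ Finset.range N, (f k - f (k + 1)) := finsum_eq_sum_of_support_subset _ hsupport
    _ = f 0 - f N := Finset.sum_range_sub' f N
    _ = sdim Vp Vm (range (D ^ 0)) := by rw [show f N = 0 from hzero _ (by omega), sub_zero]
    _ = finrank 𝕜 Vp - finrank 𝕜 Vm := by
        rw [pow_zero, Module.End.one_eq_id, range_id, sdim, top_inf_eq, top_inf_eq]

end OddEndomorphism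

theorem finrank_eq_finrank_add_finrank_of_graded_exact {𝕜 U V W : Type*} [Field 𝕜]
    [AddCommGroup U] [Module 𝕜 U] [AddCommGroup V] [Module 𝕜 V] [FiniteDimensional 𝕜 V]
    [AddCommGroup W] [Module 𝕜 W]
    {ι : U →ₗ[𝕜] V} {p : V →ₗ[𝕜] W} (hinj : Function.Injective ι)
    (hsurj : Function.Surjective p) (hexact : range ι = ker p)
    {Up Um : Submodule 𝕜 U} {Vp Vm : Submodule 𝕜 V} {Wp Wm : Submodule 𝕜 W}
    (hU : Codisjoint Up Um) (hV : IsCompl Vp Vm) (hW : Disjoint Wp Wm)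
    (hιp : ∀ x ∈ Up, ι x ∈ Vp) (hιm : ∀ x ∈ Um, ι x ∈ Vm)
    (hpp : ∀ x ∈ Vp, p x ∈ Wp) (hpm : ∀ x ∈ Vm, p x ∈ Wm) :
    finrank 𝕜 Vp = finrank 𝕜 Up + finrank 𝕜 Wp := by
  have hmap : Vp.map p = Wp := by
    rw [Submodule.map_eq_map_sup_inf hW hpp hpm, hV.sup_eq_top, Submodule.map_top,
      range_eq_top.mpr hsurj, top_inf_eq]
  have hker : Vp ⊓ ker p = Up.map ι := by
    rw [← hexact, inf_comm, Submodule.map_eq_map_sup_inf hV.disjoint hιp hιm, hU.eq_top,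
      Submodule.map_top]
  rw [← Submodule.finrank_map_add_finrank_inf_ker p Vp, hmap, hker,
    (Submodule.equivMapOfInjective ι hinj Up).finrank_eq, add_comm]

theorem stmt6_general {𝕜 U V W : Type*} [Field 𝕜]
    [AddCommGroup U] [Module 𝕜 U] [FiniteDimensional 𝕜 U]
    [AddCommGroup V] [Module 𝕜 V] [FiniteDimensional 𝕜 V]
    [AddCommGroup W] [Module 𝕜 W] [FiniteDimensional 𝕜 W]
    (ι : U →ₗ[𝕜] V) (p : V →ₗ[𝕜] W)
    (hinj : Function.Injective ι) (hsurj : Function.Surjective p)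
    (hexact : range ι = ker p)
    (Up Um : Submodule 𝕜 U) (Vp Vm : Submodule 𝕜 V) (Wp Wm : Submodule 𝕜 W)
    (hU : IsCompl Up Um) (hV : IsCompl Vp Vm) (hW : IsCompl Wp Wm)
    (hιp : ∀ x ∈ Up, ι x ∈ Vp) (hιm : ∀ x ∈ Um, ι x ∈ Vm)
    (hpp : ∀ x ∈ Vp, p x ∈ Wp) (hpm : ∀ x ∈ Vm, p x ∈ Wm)
    (DU : Module.End 𝕜 U) (DV : Module.End 𝕜 V) (DW : Module.End 𝕜 W)
    (hDUp : ∀ x ∈ Up, DU x ∈ Um) (hDUm : ∀ x ∈ Um, DU x ∈ Up)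
    (hDVp : ∀ x ∈ Vp, DV x ∈ Vm) (hDVm : ∀ x ∈ Vm, DV x ∈ Vp)
    (hDWp : ∀ x ∈ Wp, DW x ∈ Wm) (hDWm : ∀ x ∈ Wm, DW x ∈ Wp) :
    diracIndex 𝕜 DV Vp Vm = diracIndex 𝕜 DU Up Um + diracIndex 𝕜 DW Wp Wm := by
  rw [diracIndex_eq_finrank_sub_finrank hV hDVp hDVm,
    diracIndex_eq_finrank_sub_finrank hU hDUp hDUm,
    diracIndex_eq_finrank_sub_finrank hW hDWp hDWm,
    finrank_eq_finrank_add_finrank_of_graded_exact hinj hsurj hexact hU.codisjoint hV hW.disjoint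
      hιp hιm hpp hpm,
    finrank_eq_finrank_add_finrank_of_graded_exact hinj hsurj hexact hU.codisjoint.symm hV.symm
      hW.disjoint.symm hιm hιp hpm hpp]
  push_cast
  ring

/-- Corollary 3.7. Given a short exact sequence
`0 → U → V → W → 0` of finite-dimensional ℤ/2-graded vector spaces with
grading-preserving maps and compatible odd endomorphisms, the higher Dirac
index is additive: `I(V) = I(U) + I(W)`. -/
theorem stmt6 {𝕜 U V W : Type*} [Field 𝕜]
    [AddCommGroup U] [Module 𝕜 U] [FiniteDimensional 𝕜 U]
    [AddCommGroup V] [Module 𝕜 V] [FiniteDimensional 𝕜 V]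
    [AddCommGroup W] [Module 𝕜 W] [FiniteDimensional 𝕜 W]
    (ι : U →ₗ[𝕜] V) (p : V →ₗ[𝕜] W)
    (hinj : Function.Injective ι) (hsurj : Function.Surjective p)
    (hexact : range ι = ker p)
    (Up Um : Submodule 𝕜 U) (Vp Vm : Submodule 𝕜 V) (Wp Wm : Submodule 𝕜 W)
    (hU : IsCompl Up Um) (hV : IsCompl Vp Vm) (hW : IsCompl Wp Wm)
    (hιp : ∀ x ∈ Up, ι x ∈ Vp) (hιm : ∀ x ∈ Um, ι x ∈ Vm)
    (hpp : ∀ x ∈ Vp, p x ∈ Wp) (hpm : ∀ x ∈ Vm, p x ∈ Wm)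
    (DU : Module.End 𝕜 U) (DV : Module.End 𝕜 V) (DW : Module.End 𝕜 W)
    (hDUp : ∀ x ∈ Up, DU x ∈ Um) (hDUm : ∀ x ∈ Um, DU x ∈ Up)
    (hDVp : ∀ x ∈ Vp, DV x ∈ Vm) (hDVm : ∀ x ∈ Vm, DV x ∈ Vp)
    (hDWp : ∀ x ∈ Wp, DW x ∈ Wm) (hDWm : ∀ x ∈ Wm, DW x ∈ Wp)
    (hιD : ι ∘ₗ DU = DV ∘ₗ ι) (hpD : p ∘ₗ DV = DW ∘ₗ p) :
    diracIndex 𝕜 DV Vp Vm = diracIndex 𝕜 DU Up Um + diracIndex 𝕜 DW Wp Wm :=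
  stmt6_general ι p hinj hsurj hexact Up Um Vp Vm Wp Wm hU hV hW hιp hιm hpp hpm DU DV DW hDUp hDUm
    hDVp hDVm hDWp hDWm
end

section
/- Let V be a finite-dimensional vector space over a field and let D be an endomorphism of V. Let N, M ≥ 1 be integers with D^{2N} = 0 and D^{2M} = 0. Then Σ_{i=1}^{2N−1} (−1)^{i−1} ( dim ker(D^i) − dim range(D^{2N−i}) ) = Σ_{i=1}^{2M−1} (−1)^{i−1} ( dim ker(D^i) − dim range(D^{2M−i}) ), as integers. (Remark 5.6: the alternating sum of the N-differential cohomologies is stable, i.e. independent of the choice of sufficiently large even exponent 2N.) -/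
/-!
With `k i = dim ker D^i` and `n = dim V`, rank–nullity gives `dim range D^(2N-i) = n - k (2N-i)`.
The reflection `i ↦ 2N - i` preserves parity, so the sum equals `2 ∑ (-1)^(i-1) k i - n`.
Passing from `N` to `N + 1` adds `-k (2N) + k (2N+1)`, which vanishes once `D^(2N) = 0`,
since then both kernels are all of `V`.
-/

open LinearMap Module Finset

section AlternatingSum

variable {R : Type*} [CommRing R]

lemma sum_Icc_neg_one_pow_mul_succ (f : ℕ → R) {N : ℕ} (hN : 1 ≤ N) :
    ∑ i ∈ Icc 1 (2 * (N + 1) - 1), (-1 : R) ^ (i - 1) * f i =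
      ∑ i ∈ Icc 1 (2 * N - 1), (-1 : R) ^ (i - 1) * f i - f (2 * N) + f (2 * N + 1) := by
  have hodd : Odd (2 * N - 1) := ⟨N - 1, by omega⟩
  rw [show 2 * (N + 1) - 1 = 2 * N - 1 + 1 + 1 by omega, sum_Icc_succ_top (by omega),
    sum_Icc_succ_top (by omega), show 2 * N - 1 + 1 = 2 * N by omega, Nat.add_sub_cancel,
    hodd.neg_one_pow, (even_two_mul N).neg_one_pow]
  ring

lemma sum_Icc_neg_one_pow_mul_eq_of_le (f : ℕ → R) {N M : ℕ} (hN : 1 ≤ N) (hNM : N ≤ M)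
    {c : R} (hf : ∀ i, 2 * N ≤ i → f i = c) :
    ∑ i ∈ Icc 1 (2 * M - 1), (-1 : R) ^ (i - 1) * f i =
      ∑ i ∈ Icc 1 (2 * N - 1), (-1 : R) ^ (i - 1) * f i := by
  induction M, hNM using Nat.le_induction with
  | base => rfl
  | succ M hNM ih =>
    rw [sum_Icc_neg_one_pow_mul_succ f (hN.trans hNM), ih, hf _ (by omega), hf _ (by omega),
      sub_add_cancel]

lemma sum_Icc_neg_one_pow (N : ℕ) (hN : 1 ≤ N) :
    ∑ i ∈ Icc 1 (2 * N - 1), (-1 : R) ^ (i - 1) = 1 := by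
  simpa using sum_Icc_neg_one_pow_mul_eq_of_le (fun _ ↦ (1 : R)) le_rfl hN (fun _ _ ↦ rfl)

lemma sum_Icc_neg_one_pow_mul_reflect (f : ℕ → R) (N : ℕ) :
    ∑ i ∈ Icc 1 (2 * N - 1), (-1 : R) ^ (i - 1) * f (2 * N - i) =
      ∑ i ∈ Icc 1 (2 * N - 1), (-1 : R) ^ (i - 1) * f i := by
  refine sum_nbij' (2 * N - ·) (2 * N - ·) ?_ ?_ ?_ ?_ fun i hi ↦ ?_ <;>
    simp only [mem_Icc] at * <;> try omega
  rw [neg_one_pow_eq_pow_mod_two, neg_one_pow_eq_pow_mod_two (n := 2 * N - i - 1),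
    show (i - 1) % 2 = (2 * N - i - 1) % 2 by omega]

lemma sum_Icc_neg_one_pow_mul_sub_reflect (f : ℕ → R) (c : R) {N : ℕ} (hN : 1 ≤ N) :
    ∑ i ∈ Icc 1 (2 * N - 1), (-1 : R) ^ (i - 1) * (f i - (c - f (2 * N - i))) =
      2 * ∑ i ∈ Icc 1 (2 * N - 1), (-1 : R) ^ (i - 1) * f i - c := by
  have hsplit : ∀ i, (-1 : R) ^ (i - 1) * (f i - (c - f (2 * N - i))) =
      (-1) ^ (i - 1) * f i + (-1) ^ (i - 1) * f (2 * N - i) - (-1) ^ (i - 1) * c := fun i ↦ by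
    ring
  simp only [hsplit, sum_sub_distrib, sum_add_distrib, sum_Icc_neg_one_pow_mul_reflect, ← sum_mul,
    sum_Icc_neg_one_pow N hN]
  ring

end AlternatingSum

section Finrank

variable {𝕜 V : Type*} [Field 𝕜] [AddCommGroup V] [Module 𝕜 V]

lemma finrank_range_eq_sub_finrank_ker [FiniteDimensional 𝕜 V] {W : Type*} [AddCommGroup W]
    [Module 𝕜 W] (f : V →ₗ[𝕜] W) :
    (finrank 𝕜 (range f) : ℤ) = finrank 𝕜 V - finrank 𝕜 (ker f) := by
  rw [← finrank_range_add_finrank_ker f]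
  push_cast
  ring

lemma finrank_ker_pow_of_pow_eq_zero {D : Module.End 𝕜 V} {n i : ℕ} (hD : D ^ n = 0) (hi : n ≤ i) :
    finrank 𝕜 (ker (D ^ i)) = finrank 𝕜 V := by
  rw [pow_eq_zero_of_le hi hD, ker_zero, finrank_top]

lemma sum_Icc_neg_one_pow_mul_finrank_ker_sub_finrank_range [FiniteDimensional 𝕜 V]
    (D : Module.End 𝕜 V) {N : ℕ} (hN : 1 ≤ N) :
    ∑ i ∈ Icc 1 (2 * N - 1),
      (-1 : ℤ) ^ (i - 1) *
        ((finrank 𝕜 ↥(ker (D ^ i)) : ℤ) - finrank 𝕜 ↥(range (D ^ (2 * N - i)))) =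
      2 * ∑ i ∈ Icc 1 (2 * N - 1), (-1 : ℤ) ^ (i - 1) * (finrank 𝕜 ↥(ker (D ^ i)) : ℤ) -
        finrank 𝕜 V := by
  simp only [finrank_range_eq_sub_finrank_ker]
  exact sum_Icc_neg_one_pow_mul_sub_reflect (fun i ↦ (finrank 𝕜 ↥(ker (D ^ i)) : ℤ)) _ hN

end Finrank

/-- Remark 5.6, stability. If `D^{2N} = 0` and `D^{2M} = 0`
(`N, M ≥ 1`) on the finite-dimensional space `V`, then the alternating sums
`Σ_{i=1}^{2N−1} (−1)^{i−1} (dim ker D^i − dim range D^{2N−i})` and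
`Σ_{i=1}^{2M−1} (−1)^{i−1} (dim ker D^i − dim range D^{2M−i})` agree. -/
theorem stmt14 {𝕜 V : Type*} [Field 𝕜] [AddCommGroup V] [Module 𝕜 V] [FiniteDimensional 𝕜 V]
    (D : Module.End 𝕜 V) (N M : ℕ) (hN : 1 ≤ N) (hM : 1 ≤ M)
    (hDN : D ^ (2 * N) = 0) (hDM : D ^ (2 * M) = 0) :
    ∑ i ∈ Finset.Icc 1 (2 * N - 1),
      (-1 : ℤ) ^ (i - 1) *
        ((finrank 𝕜 ↥(ker (D ^ i)) : ℤ) - finrank 𝕜 ↥(range (D ^ (2 * N - i)))) =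
    ∑ i ∈ Finset.Icc 1 (2 * M - 1),
      (-1 : ℤ) ^ (i - 1) *
        ((finrank 𝕜 ↥(ker (D ^ i)) : ℤ) - finrank 𝕜 ↥(range (D ^ (2 * M - i)))) := by
  rw [sum_Icc_neg_one_pow_mul_finrank_ker_sub_finrank_range D hN,
    sum_Icc_neg_one_pow_mul_finrank_ker_sub_finrank_range D hM]
  rcases le_total N M with hNM | hMN
  · rw [sum_Icc_neg_one_pow_mul_eq_of_le _ hN hNM fun i hi ↦
      congrArg _ (finrank_ker_pow_of_pow_eq_zero hDN hi)]
  · rw [sum_Icc_neg_one_pow_mul_eq_of_le _ hM hMN fun i hi ↦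
      congrArg _ (finrank_ker_pow_of_pow_eq_zero hDM hi)]
end
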